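/- arXiv:1502.00859 — 3 statements merged into one kernel-verified Lean document; each statement's English description precedes it below -/
import Mathlib

section
/- Let k ≥ 2. For every binary sequence α_1, …, α_{k−1} ∈ {0,1}, there are induced subgraphs Y_1, …, Y_{k−1} of X_k, isomorphic to X_1, …, X_{k−1} respectively, on pairwise disjoint vertex sets with no edges of X_k between any two of them, such that for every i ∈ {1, …, k−1}: if α_i = 1 then the root side of Y_i is contained in the root side of X_k, and if α_i = 0 then the non-root side of Y_i is contained in the root side of X_k. -/
/-! ### The graphs `X_k` -/

/-- Vertex set of the graph `X_k` (with a junk value at `k = 0`). -/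
def XV : ℕ → Type
  | 0 => PUnit
  | 1 => PUnit
  | 2 => Bool
  | (n+3) => Option (XV (n+2) ⊕ XV (n+2))

/-- The root of `X_k`. -/
def XRoot : (k : ℕ) → XV k
  | 0 => PUnit.unit
  | 1 => PUnit.unit
  | 2 => true
  | (_+3) => none

/-- The side of a vertex of `X_k`: `true` is the root side, `false` the non-root side. -/
def XSide : (k : ℕ) → XV k → Bool
  | 0, _ => true
  | 1, _ => true
  | 2, v => v
  | (_+3), none => true
  | (n+3), some (Sum.inl x) => !(XSide (n+2) x)
  | (n+3), some (Sum.inr x) => XSide (n+2) x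

/-- Base adjacency relation of `X_k`:  for `k ≥ 3`, `X_k` consists of two disjoint copies of
`X_{k-1}` with no edges in between, together with a root vertex joined to the root side of the
first copy and to the non-root side of the second copy. -/
def XRel : (k : ℕ) → XV k → XV k → Prop
  | 0, _, _ => False
  | 1, _, _ => False
  | 2, u, v => u ≠ v
  | (n+3), none, some (Sum.inl x) => XSide (n+2) x = true
  | (n+3), none, some (Sum.inr x) => XSide (n+2) x = false
  | (n+3), some (Sum.inl x), none => XSide (n+2) x = true
  | (n+3), some (Sum.inr x), none => XSide (n+2) x = false
  | (n+3), some (Sum.inl x), some (Sum.inl y) => XRel (n+2) x y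
  | (n+3), some (Sum.inr x), some (Sum.inr y) => XRel (n+2) x y
  | (_+3), _, _ => False

/-- The graph `X_k`. -/
def XGraph (k : ℕ) : SimpleGraph (XV k) := SimpleGraph.fromRel (XRel k)

/-!
Strengthen the claim: for either side `β` of `X_{n+2}`, the `Y_i` can be placed so that their
`α_i`-sides lie in side `β`. Inductively, `Y_{n+1}` is taken to be one of the two copies of
`X_{n+1}` in `X_{n+2}` (the first copy has its sides swapped, the second does not), chosen so that
its `α_{n+1}`-side lands in side `β`; the smaller `Y_i` are placed recursively in the other copy,
aiming at whichever side of that copy lies in side `β`. Distinct copies are disjoint and not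
joined by any edge.
-/

open Function

theorem Fin.pairwise_of_castSucc_of_last {α : Type*} {R : α → α → Prop} [Std.Symm R]
    {n : ℕ} {s : Fin (n + 1) → α} (hcast : Pairwise (R on fun i : Fin n => s i.castSucc))
    (hlast : ∀ i : Fin n, R (s (Fin.last n)) (s i.castSucc)) : Pairwise (R on s) := by
  intro i j hij
  induction i using Fin.lastCases with
  | last =>
    induction j using Fin.lastCases with
    | last => exact absurd rfl hij
    | cast j => exact hlast j
  | cast i =>
    induction j using Fin.lastCases with
    | last => exact Std.Symm.symm _ _ (hlast i)
    | cast j => exact hcast ((Fin.castSucc_injective n).ne_iff.mp hij)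

namespace SimpleGraph

variable {V W : Type*}

def Separated (G : SimpleGraph V) (s t : Set V) : Prop :=
  ∀ u ∈ s, ∀ v ∈ t, u ≠ v ∧ ¬ G.Adj u v

instance (G : SimpleGraph V) : Std.Symm G.Separated :=
  ⟨fun _ _ h v hv u hu => ⟨(h u hu v hv).1.symm, fun hadj => (h u hu v hv).2 hadj.symm⟩⟩

theorem Separated.mono {G : SimpleGraph V} {s t s' t' : Set V} (h : G.Separated s t)
    (hs : s' ⊆ s) (ht : t' ⊆ t) : G.Separated s' t' :=
  fun u hu v hv => h u (hs hu) v (ht hv)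

theorem Separated.image {G : SimpleGraph V} {H : SimpleGraph W} {s t : Set V}
    (h : G.Separated s t) (f : G ↪g H) : H.Separated (f '' s) (f '' t) := by
  rintro _ ⟨u, hu, rfl⟩ _ ⟨v, hv, rfl⟩
  exact ⟨f.injective.ne (h u hu v hv).1, f.map_adj_iff.not.mpr (h u hu v hv).2⟩

end SimpleGraph

open SimpleGraph

/-- The copy of `X_{n+2}` inside `X_{n+3}` selected by `flip`: the first copy (whose sides are
swapped in `X_{n+3}`) if `flip`, the second one otherwise. -/
def XCopy (n : ℕ) (flip : Bool) : XGraph (n + 2) ↪g XGraph (n + 3) where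
  toFun x := some (if flip then Sum.inl x else Sum.inr x)
  inj' x y h := by
    cases flip
    · exact Sum.inr_injective (Option.some_injective _ h)
    · exact Sum.inl_injective (Option.some_injective _ h)
  map_rel_iff' {x y} := by
    simp only [XGraph, fromRel_adj]
    cases flip
    · exact and_congr_left' ((Option.some_injective _).ne_iff.trans Sum.inr_injective.ne_iff)
    · exact and_congr_left' ((Option.some_injective _).ne_iff.trans Sum.inl_injective.ne_iff)

theorem XSide_XCopy (n : ℕ) (flip : Bool) (x : XV (n + 2)) :
    XSide (n + 3) (XCopy n flip x) = xor flip (XSide (n + 2) x) := by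
  cases flip <;> simp only [Bool.false_xor, Bool.true_xor] <;> rfl

theorem separated_range_XCopy (n : ℕ) {f g : Bool} (hfg : f ≠ g) :
    (XGraph (n + 3)).Separated (Set.range (XCopy n f)) (Set.range (XCopy n g)) := by
  rintro _ ⟨x, rfl⟩ _ ⟨y, rfl⟩
  -- `XRel` between the two copies reduces to `False`
  cases f <;> cases g
  · exact absurd rfl hfg
  · exact ⟨fun h => Sum.inr_ne_inl (Option.some_injective _ h), fun ⟨_, h⟩ => h.elim id id⟩
  · exact ⟨fun h => Sum.inl_ne_inr (Option.some_injective _ h), fun ⟨_, h⟩ => h.elim id id⟩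
  · exact absurd rfl hfg

def XVertexEmbedding (β : Bool) : XGraph 1 ↪g XGraph 2 where
  toFun _ := β
  inj' _ _ _ := rfl
  map_rel_iff' := iff_of_false (fun h => h.ne rfl) (fun h => h.ne rfl)

theorem exists_separated_embeddings_XGraph (n : ℕ) (β : Bool) (α : Fin (n + 1) → Bool) :
    ∃ e : (i : Fin (n + 1)) → XGraph (i + 1) ↪g XGraph (n + 2),
      Pairwise ((XGraph (n + 2)).Separated on fun i => Set.range (e i)) ∧
      ∀ (i : Fin (n + 1)) (x : XV (i + 1)), XSide (i + 1) x = α i → XSide (n + 2) (e i x) = β := by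
  induction n generalizing β with
  | zero =>
    refine ⟨Fin.lastCases (XVertexEmbedding β) (fun i => i.elim0),
      Fin.pairwise_of_castSucc_of_last (fun i => i.elim0) (fun i => i.elim0), fun i => ?_⟩
    induction i using Fin.lastCases with
    | last => exact fun _ _ => rfl
    | cast i => exact i.elim0
  | succ n ih =>
    set f := xor β (α (Fin.last (n + 1)))
    obtain ⟨e, he_sep, he_side⟩ := ih (xor (!f) β) (fun i => α i.castSucc)
    refine ⟨Fin.lastCases (XCopy n f) (fun i => (XCopy n (!f)).comp (e i)), ?_, fun i => ?_⟩
    · refine Fin.pairwise_of_castSucc_of_last (fun i j hij => ?_) (fun i => ?_)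
      · simpa [Function.onFun, Set.range_comp] using (he_sep hij).image (XCopy n (!f))
      · simpa using (separated_range_XCopy n (Bool.not_ne_self f).symm).mono subset_rfl
          (Set.range_comp_subset_range (e i) (XCopy n (!f)))
    induction i using Fin.lastCases with
    | last =>
      intro x (hx : XSide (n + 2) x = _)
      simp [XSide_XCopy, hx, f]
    | cast i =>
      intro x hx
      simp [XSide_XCopy, he_side i x hx]

theorem stmt1 (k : ℕ) (hk : 2 ≤ k) (α : Fin (k - 1) → Bool) :
    ∃ e : (i : Fin (k - 1)) → (XGraph ((i : ℕ) + 1) ↪g XGraph k),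
      (∀ i j : Fin (k - 1), i ≠ j → ∀ x y, e i x ≠ e j y) ∧
      (∀ i j : Fin (k - 1), i ≠ j → ∀ x y, ¬ (XGraph k).Adj (e i x) (e j y)) ∧
      (∀ i : Fin (k - 1), ∀ x : XV ((i : ℕ) + 1),
        (α i = true → XSide ((i : ℕ) + 1) x = true → XSide k (e i x) = true) ∧
        (α i = false → XSide ((i : ℕ) + 1) x = false → XSide k (e i x) = true)) := by
  obtain ⟨n, rfl⟩ : ∃ n, k = n + 2 := ⟨k - 2, by omega⟩
  obtain ⟨e, he_sep, he_side⟩ := exists_separated_embeddings_XGraph n true α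
  refine ⟨e, fun i j hij x y => (he_sep hij _ ⟨x, rfl⟩ _ ⟨y, rfl⟩).1,
    fun i j hij x y => (he_sep hij _ ⟨x, rfl⟩ _ ⟨y, rfl⟩).2, fun i x => ⟨?_, ?_⟩⟩ <;>
    exact fun hα hx => he_side i x (hx.trans hα.symm)
end

section
/- For every k ≥ 1, the graph X_k is P_6-free, i.e. it contains no induced path on 6 vertices. -/
/-!
For `k ≥ 3` the root of `X_k` is adjacent to the whole non-root side, so it cannot be an end of an
induced `P_4`: sides alternate along a path, so the fourth vertex is again on the non-root side.
Every vertex of an induced `P_6` is an end of an induced `P_4`, hence an induced `P_6` avoids the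
root; as there are no edges between the two copies of `X_{k-1}`, it then lies in one of them, and
induction on `k` applies.
-/

/-! ### P_n-free graphs -/

/-- `f` lists the vertices of an induced path on `n` vertices in `G`. -/
def IsInducedPath {V : Type*} (G : SimpleGraph V) (n : ℕ) (f : Fin n → V) : Prop :=
  Function.Injective f ∧
    ∀ a b : Fin n, G.Adj (f a) (f b) ↔ (a.val + 1 = b.val ∨ b.val + 1 = a.val)

/-- `G` contains no induced path on `n` vertices. -/
def PFree {V : Type*} (G : SimpleGraph V) (n : ℕ) : Prop :=
  ¬ ∃ f : Fin n → V, IsInducedPath G n f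

open SimpleGraph

namespace IsInducedPath

variable {V : Type*} {G : SimpleGraph V}

theorem exists_from_of_two_mul_le {n m : ℕ} {f : Fin n → V} (hf : IsInducedPath G n f)
    (hmn : 2 * m ≤ n) (i : Fin n) :
    ∃ g : Fin (m + 1) → V, IsInducedPath G (m + 1) g ∧ g 0 = f i := by
  obtain ⟨hinj, hadj⟩ := hf
  by_cases hi : i.val + m < n
  · refine ⟨fun j => f ⟨i + j, by omega⟩, ⟨fun a b h => ?_, fun a b => ?_⟩, by simp⟩
    · have : (i : ℕ) + a = i + b := congrArg Fin.val (hinj h)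
      exact Fin.ext (by omega)
    · exact (hadj _ _).trans (by simp only; omega)
  · refine ⟨fun j => f ⟨i - j, by omega⟩, ⟨fun a b h => ?_, fun a b => ?_⟩, by simp⟩
    · have : (i : ℕ) - a = i - b := congrArg Fin.val (hinj h)
      exact Fin.ext (by omega)
    · exact (hadj _ _).trans (by simp only; omega)

theorem apply_zero_ne_of_forall_color_ne {f : Fin 4 → V} (hf : IsInducedPath G 4 f)
    (C : G.Coloring Bool) {r : V} (hr : ∀ v, C v ≠ C r → G.Adj r v) : f 0 ≠ r := by
  rintro rfl
  have alternate (i j : Fin 4) (hij : i.val + 1 = j.val) : C (f j) = !C (f i) :=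
    Bool.eq_not_iff.2 (C.valid ((hf.2 i j).2 (.inl hij))).symm
  have h30 : C (f 3) ≠ C (f 0) := by
    rw [alternate 2 3 rfl, alternate 1 2 rfl, alternate 0 1 rfl, Bool.not_not]
    exact Bool.not_ne_self _
  simpa using (hf.2 0 3).1 (hr _ h30)

theorem range_subset_of_closed {n : ℕ} {f : Fin (n + 1) → V} (hf : IsInducedPath G (n + 1) f)
    {S : Set V} (h0 : f 0 ∈ S) (hS : ∀ u ∈ S, ∀ v ∈ Set.range f, G.Adj u v → v ∈ S) :
    Set.range f ⊆ S := by
  rintro _ ⟨i, rfl⟩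
  induction i using Fin.induction with
  | zero => exact h0
  | succ i ih => exact hS _ ih _ ⟨_, rfl⟩ ((hf.2 _ _).2 (Or.inl (by simp)))

theorem exists_of_range_subset {W : Type*} {H : SimpleGraph W} {n : ℕ} {f : Fin n → V}
    (hf : IsInducedPath G n f) (φ : H ↪g G) (h : Set.range f ⊆ Set.range φ) :
    ∃ g : Fin n → W, IsInducedPath H n g := by
  choose g hg using fun i => h ⟨i, rfl⟩
  refine ⟨g, fun a b hab => hf.1 (by rw [← hg, ← hg, hab]), fun a b => ?_⟩
  rw [← hf.2, ← hg, ← hg, φ.map_adj_iff]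

end IsInducedPath

theorem PFree.of_card_lt {V : Type*} [Fintype V] (G : SimpleGraph V) {n : ℕ}
    (h : Fintype.card V < n) : PFree G n := fun ⟨f, hf⟩ =>
  (Fintype.card_le_of_injective f hf.1).not_gt (by simpa using h)

namespace XGraph

theorem side_ne_of_rel : ∀ (k : ℕ) (u v : XV k), XRel k u v → XSide k u ≠ XSide k v
  | 2, u, v, h => h
  | n + 3, some (.inl x), some (.inl y), h => by
      simpa [XSide] using side_ne_of_rel (n + 2) x y h
  | n + 3, some (.inr x), some (.inr y), h => side_ne_of_rel (n + 2) x y h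
  | n + 3, none, some (.inl x), h | n + 3, none, some (.inr x), h
  | n + 3, some (.inl x), none, h | n + 3, some (.inr x), none, h => by
      simp_all [XRel, XSide]

theorem adj_iff {k : ℕ} (u v : XV k) :
    (XGraph k).Adj u v ↔ u ≠ v ∧ (XRel k u v ∨ XRel k v u) :=
  fromRel_adj _ _ _

def sideColoring (k : ℕ) : (XGraph k).Coloring Bool :=
  Coloring.mk (XSide k) fun h => by
    rcases (adj_iff _ _).1 h with ⟨-, h | h⟩
    exacts [side_ne_of_rel k _ _ h, (side_ne_of_rel k _ _ h).symm]

variable {n : ℕ}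

theorem adj_root_iff (v : XV (n + 3)) :
    (XGraph (n + 3)).Adj none v ↔ XSide (n + 3) v = false := by
  refine (adj_iff _ _).trans ?_
  rcases v with _ | x | x
  · simp only [XRel, or_self, and_false, XSide, Bool.true_eq_false]
  · simp only [XRel, or_self, XSide, Bool.not_eq_eq_eq_not, Bool.not_false, and_iff_right_iff_imp]
    exact fun _ => nofun
  · simp only [XRel, or_self, XSide, and_iff_right_iff_imp]
    exact fun _ => nofun

theorem adj_inl_inl (x y : XV (n + 2)) :
    (XGraph (n + 3)).Adj (some (.inl x)) (some (.inl y)) ↔ (XGraph (n + 2)).Adj x y :=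
  (adj_iff _ _).trans <|
    (and_congr ((Option.some_injective _).comp Sum.inl_injective).ne_iff Iff.rfl).trans
      (adj_iff x y).symm

theorem adj_inr_inr (x y : XV (n + 2)) :
    (XGraph (n + 3)).Adj (some (.inr x)) (some (.inr y)) ↔ (XGraph (n + 2)).Adj x y :=
  (adj_iff _ _).trans <|
    (and_congr ((Option.some_injective _).comp Sum.inr_injective).ne_iff Iff.rfl).trans
      (adj_iff x y).symm

theorem not_adj_inl_inr (x y : XV (n + 2)) :
    ¬ (XGraph (n + 3)).Adj (some (.inl x)) (some (.inr y)) :=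
  fun h => ((adj_iff _ _).1 h).2.elim id id

def inlEmbedding (n : ℕ) : XGraph (n + 2) ↪g XGraph (n + 3) where
  toFun x := some (.inl x)
  inj' := (Option.some_injective _).comp Sum.inl_injective
  map_rel_iff' := adj_inl_inl _ _

def inrEmbedding (n : ℕ) : XGraph (n + 2) ↪g XGraph (n + 3) where
  toFun x := some (.inr x)
  inj' := (Option.some_injective _).comp Sum.inr_injective
  map_rel_iff' := adj_inr_inr _ _

theorem exists_copy_of_ne_root {v : XV (n + 3)} (hv : v ≠ none) :
    ∃ φ : XGraph (n + 2) ↪g XGraph (n + 3), v ∈ Set.range φ ∧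
      ∀ u ∈ Set.range φ, ∀ w, (XGraph (n + 3)).Adj u w →
        w ∈ Set.range φ ∨ w = none := by
  rcases v with _ | x | x
  · exact absurd rfl hv
  · refine ⟨inlEmbedding n, ⟨x, rfl⟩, ?_⟩
    rintro _ ⟨y, rfl⟩ (_ | z | z) h
    · exact .inr rfl
    · exact .inl ⟨z, rfl⟩
    · exact absurd h (not_adj_inl_inr y z)
  · refine ⟨inrEmbedding n, ⟨x, rfl⟩, ?_⟩
    rintro _ ⟨y, rfl⟩ (_ | z | z) h
    · exact .inr rfl
    · exact absurd h.symm (not_adj_inl_inr z y)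
    · exact .inl ⟨z, rfl⟩

theorem pFree_six_succ (IH : PFree (XGraph (n + 2)) 6) : PFree (XGraph (n + 3)) 6 := by
  rintro ⟨f, hf⟩
  have hroot : ∀ i, f i ≠ none := fun i => by
    obtain ⟨g, hg, hgi⟩ := hf.exists_from_of_two_mul_le (m := 3) le_rfl i
    exact hgi ▸ hg.apply_zero_ne_of_forall_color_ne (sideColoring _)
      fun v hv => (adj_root_iff v).2 (Bool.eq_false_iff.2 hv)
  obtain ⟨φ, h0, hφ⟩ := exists_copy_of_ne_root (hroot 0)
  exact IH <| hf.exists_of_range_subset φ <| hf.range_subset_of_closed h0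
    fun u hu _ ⟨i, hi⟩ h => (hφ u hu _ h).resolve_right (hi ▸ hroot i)

end XGraph

theorem stmt3 (k : ℕ) : PFree (XGraph k) 6 := by
  match k with
  | 0 | 1 => exact PFree.of_card_lt (V := PUnit) _ (by simp)
  | 2 => exact PFree.of_card_lt (V := Bool) _ (by simp)
  | n + 3 => exact XGraph.pFree_six_succ (stmt3 (n + 2))
end

section
/- Algorithm 1 produces a proper coloring of every on-line bipartite graph: whenever a new vertex v is presented, no previously presented neighbor of v has received the color that Algorithm 1 assigns to v. -/
/-! ### Algorithm 1 -/

/-- The three palettes of colors `a_i`, `b_i`, `c_i` used by Algorithm 1. -/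
inductive PalColor : Type
  | a : ℕ → PalColor
  | b : ℕ → PalColor
  | c : ℕ → PalColor
  deriving DecidableEq

/-- The index of a color. -/
def PalColor.index : PalColor → ℕ
  | a i => i
  | b i => i
  | c i => i

/-- A vertex `u` has color index `j` when its color is `a_j` or `b_j`. -/
def hasColorIndex (col : ℕ → PalColor) (u j : ℕ) : Prop :=
  col u = PalColor.a j ∨ col u = PalColor.b j

/-- Vertex set of `G_i[u]` at time `t` (vertices are presented in the order `0, 1, 2, …`):
the vertices presented before time `t` whose color has index between `1` and `i`,
together with `u`. -/
def domSet (col : ℕ → PalColor) (t i u : ℕ) : Set ℕ :=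
  {w | (w < t ∧ 1 ≤ (col w).index ∧ (col w).index ≤ i) ∨ w = u}

/-- `x` and `y` are connected within the subgraph of `G` induced on `S`. -/
def ReachIn (G : SimpleGraph ℕ) (S : Set ℕ) (x y : ℕ) : Prop :=
  ∃ (hx : x ∈ S) (hy : y ∈ S), (G.induce S).Reachable ⟨x, hx⟩ ⟨y, hy⟩

/-- `x` and `y` are joined by a walk of even length within the subgraph of `G` induced on `S`;
in a bipartite graph this says exactly that `x` and `y` are on the same side of their
(common) connected component. -/
def EvenReachIn (G : SimpleGraph ℕ) (S : Set ℕ) (x y : ℕ) : Prop :=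
  ∃ (hx : x ∈ S) (hy : y ∈ S) (p : (G.induce S).Walk ⟨x, hx⟩ ⟨y, hy⟩), Even p.length

/-- `C_i[u]` at time `t`: the connected component of `u` in the subgraph induced on
`domSet col t i u`. -/
def comp (G : SimpleGraph ℕ) (col : ℕ → PalColor) (t i u : ℕ) : Set ℕ :=
  {w | ReachIn G (domSet col t i u) u w}

/-- `C_i^y(u)` at time `t`: the connected component of `y` in `C_i(u) = C_i[u] \ {u}`. -/
def compMinus (G : SimpleGraph ℕ) (col : ℕ → PalColor) (t i u y : ℕ) : Set ℕ :=
  {w | ReachIn G (domSet col t i u \ {u}) y w}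

/-- Color `a_i` is mixed in `C_i[t]` at time `t`: vertices on both sides of `C_i[t]`
have color `a_i`. -/
def MixedA (G : SimpleGraph ℕ) (col : ℕ → PalColor) (t i : ℕ) : Prop :=
  ∃ x ∈ comp G col t i t, ∃ y ∈ comp G col t i t,
    col x = PalColor.a i ∧ col y = PalColor.a i ∧
    ¬ EvenReachIn G (domSet col t i t) x y

/-- `m = max {i ≥ 1 | a_i is mixed in C_i[t]} + 1` (with `max ∅ = 0`). -/
noncomputable def mIdx (G : SimpleGraph ℕ) (col : ℕ → PalColor) (t : ℕ) : ℕ :=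
  sSup {i | 1 ≤ i ∧ MixedA G col t i} + 1

/-- `u'` is universal to `C_{j-1}[u]` (at time `t`): `u'` is adjacent to all vertices in one of
the two sides of `C_{j-1}[u]`. -/
def UnivTo (G : SimpleGraph ℕ) (col : ℕ → PalColor) (t j u u' : ℕ) : Prop :=
  (∀ x ∈ comp G col t (j-1) u, EvenReachIn G (domSet col t (j-1) u) u x → G.Adj u' x) ∨
  (∀ x ∈ comp G col t (j-1) u, ¬ EvenReachIn G (domSet col t (j-1) u) u x → G.Adj u' x)

open Classical in
/-- One step of Algorithm 1: the color given to the vertex presented at time `t`, assuming that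
`col` records the colors of the previously presented vertices `0, …, t-1`. -/
noncomputable def step (G : SimpleGraph ℕ) (col : ℕ → PalColor) (t : ℕ) : PalColor :=
  let m := mIdx G col t
  let S := domSet col t m t
  let C := comp G col t m t
  let I1 : Set ℕ := {x ∈ C | EvenReachIn G S t x}
  let I2 : Set ℕ := {x ∈ C | ¬ EvenReachIn G S t x}
  if ∃ u ∈ I2, col u = PalColor.a m then PalColor.b m
  else if ∃ u ∈ I2, col u = PalColor.c m then PalColor.a m
  else if ∃ u ∈ I1 ∪ I2, ∃ u' ∈ I2, ∃ j : ℕ, hasColorIndex col u j ∧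
      ((m : ℝ) - Real.sqrt (2 * m) + 2 ≤ (j : ℝ)) ∧ UnivTo G col t j u u'
    then PalColor.c m
  else PalColor.a m

/-- The colors of the first `k` presented vertices under Algorithm 1 (junk elsewhere). -/
noncomputable def algoColAux (G : SimpleGraph ℕ) : ℕ → ℕ → PalColor
  | 0 => fun _ => PalColor.a 0
  | (k+1) => fun w => if w = k then step G (algoColAux G k) k else algoColAux G k w

/-- `algoCol G v` is the color that Algorithm 1 assigns to vertex `v` when the on-line graph `G`
is presented in the vertex order `0, 1, 2, …`. -/
noncomputable def algoCol (G : SimpleGraph ℕ) (v : ℕ) : PalColor :=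
  algoColAux G (v + 1) v

/-- The on-line graph on `ℕ` obtained by presenting the vertices of `G` in the order given by
the enumeration `π` (vertices `≥ n` are isolated). -/
def toNatGraph {V : Type*} (G : SimpleGraph V) {n : ℕ} (π : Fin n ≃ V) : SimpleGraph ℕ :=
  SimpleGraph.fromRel (fun i j => ∃ (hi : i < n) (hj : j < n), G.Adj (π ⟨i, hi⟩) (π ⟨j, hj⟩))


/-! ### Helper lemmas -/

private lemma aux_junk (G : SimpleGraph ℕ) : ∀ k w, k ≤ w → algoColAux G k w = PalColor.a 0 := by
  intro k
  induction k with
  | zero => intro w _; rfl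
  | succ k ih =>
    intro w h
    simp only [algoColAux]
    rw [if_neg (by omega)]
    exact ih w (by omega)

private lemma aux_stable (G : SimpleGraph ℕ) (w : ℕ) : ∀ k, w < k → algoColAux G k w = algoCol G w := by
  intro k
  induction k with
  | zero => omega
  | succ k ih =>
    intro h
    by_cases hwk : w = k
    · subst hwk; rfl
    · simp only [algoColAux]; rw [if_neg hwk]
      exact ih (by omega)

private lemma algoCol_eq_step (G : SimpleGraph ℕ) (v : ℕ) :
    algoCol G v = step G (algoColAux G v) v := by
  simp [algoCol, algoColAux]

private lemma walk_mono {G : SimpleGraph ℕ} {S T : Set ℕ} (hST : S ⊆ T) {x y : ℕ}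
    (hx : x ∈ S) (hy : y ∈ S) (p : (G.induce S).Walk ⟨x, hx⟩ ⟨y, hy⟩) :
    ∃ q : (G.induce T).Walk ⟨x, hST hx⟩ ⟨y, hST hy⟩, q.length = p.length := by
  let f : G.induce S →g G.induce T := ⟨Set.inclusion hST, fun {a b} hab => hab⟩
  exact ⟨p.map f, p.length_map f⟩

private lemma walk_parity {G : SimpleGraph ℕ} {side : ℕ → Bool}
    (hside : ∀ x y, G.Adj x y → side x ≠ side y)
    {S : Set ℕ} {x y : S} (p : (G.induce S).Walk x y) :
    Even p.length ↔ side x.val = side y.val := by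
  induction p with
  | nil => simp
  | @cons a b c h p ih =>
    have hab : side a.val ≠ side b.val := hside _ _ h
    simp only [SimpleGraph.Walk.length_cons, Nat.even_add_one, ih]
    revert hab
    cases hb : side b.val <;> cases hc : side c.val <;> cases ha : side a.val <;> simp

private lemma not_even_of_odd_walk {G : SimpleGraph ℕ} {side : ℕ → Bool}
    (hside : ∀ x y, G.Adj x y → side x ≠ side y)
    {S : Set ℕ} {x y : ℕ} (hx : x ∈ S) (hy : y ∈ S)
    (p : (G.induce S).Walk ⟨x, hx⟩ ⟨y, hy⟩) (hp : ¬ Even p.length) :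
    ¬ EvenReachIn G S x y := by
  rintro ⟨hx', hy', q, hq⟩
  exact hp ((walk_parity hside p).mpr ((walk_parity hside q).mp hq))

private lemma mem_domSet_lt {col : ℕ → PalColor} {v m x : ℕ} (hx : x < v)
    (h1 : 1 ≤ (col x).index) (h2 : (col x).index ≤ m) : x ∈ domSet col v m v := by
  exact Or.inl ⟨hx, h1, h2⟩

private lemma mem_domSet_self (col : ℕ → PalColor) (v m : ℕ) : v ∈ domSet col v m v :=
  Or.inr rfl

/-- If `w < v` is a neighbor of `v` whose color has index between 1 and `m`, then
`w` lies in `C_m[v]` on the side opposite to `v`. -/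
private lemma w_in_I2 {G : SimpleGraph ℕ} {side : ℕ → Bool}
    (hside : ∀ x y, G.Adj x y → side x ≠ side y)
    (col : ℕ → PalColor) {v w m : ℕ} (hw : w < v) (hadj : G.Adj v w)
    (h1 : 1 ≤ (col w).index) (h2 : (col w).index ≤ m) :
    w ∈ comp G col v m v ∧ ¬ EvenReachIn G (domSet col v m v) v w := by
  have hwS : w ∈ domSet col v m v := mem_domSet_lt hw h1 h2
  have hvS : v ∈ domSet col v m v := mem_domSet_self col v m
  have hedge : (G.induce (domSet col v m v)).Adj ⟨v, hvS⟩ ⟨w, hwS⟩ := hadj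
  refine ⟨⟨hvS, hwS, ⟨SimpleGraph.Walk.cons hedge SimpleGraph.Walk.nil⟩⟩,
    not_even_of_odd_walk hside hvS hwS (SimpleGraph.Walk.cons hedge SimpleGraph.Walk.nil) ?_⟩
  simp [Nat.even_add_one]

theorem stmt5 (G : SimpleGraph ℕ) (n : ℕ) (hfin : ∀ i j, G.Adj i j → i < n ∧ j < n)
    (hbip : ∃ side : ℕ → Bool, ∀ x y, G.Adj x y → side x ≠ side y)
    (v w : ℕ) (hw : w < v) (hadj : G.Adj w v) :
    algoCol G w ≠ algoCol G v := by
  obtain ⟨side, hside⟩ := hbip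
  intro heq
  have hadj' : G.Adj v w := hadj.symm
  set colv := algoColAux G v with hcolv
  have hstable : ∀ x, x < v → colv x = algoCol G x := fun x hx => aux_stable G x v hx
  have hv_step : algoCol G v = step G colv v := algoCol_eq_step G v
  have hm1 : 1 ≤ mIdx G colv v := by unfold mIdx; omega
  rw [hv_step] at heq
  simp only [step] at heq
  set m := mIdx G colv v with hmdef
  have hcw : colv w = algoCol G w := hstable w hw
  split_ifs at heq with h1 h2 h3
  · -- v gets b m; the hard case
    -- the color of w is b m
    have hcwb : colv w = PalColor.b m := by rw [hcw, heq]
    -- analyze the step at time w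
    set colw := algoColAux G w with hcolw
    have hw_step : step G colw w = PalColor.b m := by
      rw [← algoCol_eq_step G w]; exact heq
    simp only [step] at hw_step
    split_ifs at hw_step with g1 g2 g3
    · -- branch 1 at time w: mIdx at w is also m, and some u on side opposite to w has a m
      have hmw : mIdx G colw w = m := by
        exact PalColor.b.inj hw_step
      rw [hmw] at g1
      obtain ⟨u, hu_mem, hu_col⟩ := g1
      obtain ⟨hu_comp, hu_ne⟩ := hu_mem
      obtain ⟨hwSw, huSw, hr⟩ := hu_comp
      obtain ⟨p⟩ := hr
      have hodd : ¬ Even p.length := fun he => hu_ne ⟨hwSw, huSw, p, he⟩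
      -- u < w
      have hu_lt : u < w := by
        rcases huSw with ⟨h, -, -⟩ | rfl
        · exact h
        · exact absurd ⟨hwSw, hwSw, SimpleGraph.Walk.nil, by simp⟩ hu_ne
      -- colors agree at times w and v
      have hagree : ∀ x, x < w → colw x = colv x := fun x hx => by
        rw [hcolw, aux_stable G x w hx]
        exact (hstable x (by omega)).symm
      -- domSet at time w is contained in domSet at time v
      have hsub : domSet colw w m w ⊆ domSet colv v m v := by
        rintro x (⟨hxw, hx1, hx2⟩ | rfl)
        · rw [hagree x hxw] at hx1 hx2
          exact Or.inl ⟨by omega, hx1, hx2⟩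
        · exact Or.inl ⟨hw, by rw [hcwb]; exact hm1, by rw [hcwb]; exact le_rfl⟩
      -- lift the odd walk from w to u
      obtain ⟨q, hq⟩ := walk_mono hsub hwSw huSw p
      have hvS : v ∈ domSet colv v m v := mem_domSet_self colv v m
      have hedge : (G.induce (domSet colv v m v)).Adj ⟨v, hvS⟩ ⟨w, hsub hwSw⟩ := hadj'
      -- the even walk from v to u
      have hreven : Even (SimpleGraph.Walk.cons hedge q).length := by
        rw [SimpleGraph.Walk.length_cons, Nat.even_add_one, hq]
        exact hodd
      have hu_compv : u ∈ comp G colv v m v :=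
        ⟨hvS, hsub huSw, ⟨SimpleGraph.Walk.cons hedge q⟩⟩
      have hu_colv : colv u = PalColor.a m := by rw [← hagree u hu_lt]; exact hu_col
      -- the witness from branch 1 at time v
      obtain ⟨u', hu'_mem, hu'_col⟩ := h1
      obtain ⟨hu'_comp, hu'_ne⟩ := hu'_mem
      obtain ⟨hvS', hu'S, hr'⟩ := hu'_comp
      obtain ⟨s⟩ := hr'
      have hsodd : ¬ Even s.length := fun he => hu'_ne ⟨hvS', hu'S, s, he⟩
      -- u and u' lie on opposite sides: a m is mixed in C_m[v]
      have hmix : MixedA G colv v m := by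
        refine ⟨u, hu_compv, u', ⟨hvS', hu'S, ⟨s⟩⟩, hu_colv, hu'_col, ?_⟩
        refine not_even_of_odd_walk hside (hsub huSw) hu'S
          ((SimpleGraph.Walk.cons hedge q).reverse.append s) ?_
        intro he
        rw [SimpleGraph.Walk.length_append, SimpleGraph.Walk.length_reverse,
          Nat.even_add] at he
        exact hsodd (he.mp hreven)
      -- contradiction with the maximality in the definition of m
      have hbdd : BddAbove {i | 1 ≤ i ∧ MixedA G colv v i} := by
        refine ⟨Finset.sup (Finset.range v) (fun x => (colv x).index), ?_⟩
        rintro i ⟨hi1, x, ⟨-, hxS, -⟩, y, -, hx_colv, -, -⟩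
        rcases hxS with ⟨hxv, -, -⟩ | hxeq
        · have h := Finset.le_sup (f := fun z => (colv z).index) (Finset.mem_range.mpr hxv)
          simpa [hx_colv, PalColor.index] using h
        · rw [hxeq, hcolv, aux_junk G v v le_rfl] at hx_colv
          simp only [PalColor.a.injEq] at hx_colv
          omega
      have hle : m ≤ sSup {i | 1 ≤ i ∧ MixedA G colv v i} := le_csSup hbdd ⟨hm1, hmix⟩
      have : mIdx G colv v = sSup {i | 1 ≤ i ∧ MixedA G colv v i} + 1 := rfl
      omega
  · -- v gets a m, so w would have a m, contradicting that branch 1 failed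
    have hcwa : colv w = PalColor.a m := by rw [hcw, heq]
    have hc := w_in_I2 hside colv hw hadj' (by rw [hcwa]; exact hm1) (by rw [hcwa])
    exact h1 ⟨w, ⟨hc.1, hc.2⟩, hcwa⟩
  · -- v gets c m, so w would have c m, contradicting that branch 2 failed
    have hcwc : colv w = PalColor.c m := by rw [hcw, heq]
    have hc := w_in_I2 hside colv hw hadj' (by rw [hcwc]; exact hm1) (by rw [hcwc])
    exact h2 ⟨w, ⟨hc.1, hc.2⟩, hcwc⟩
  · -- v gets a m (last branch)
    have hcwa : colv w = PalColor.a m := by rw [hcw, heq]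
    have hc := w_in_I2 hside colv hw hadj' (by rw [hcwa]; exact hm1) (by rw [hcwa])
    exact h1 ⟨w, ⟨hc.1, hc.2⟩, hcwa⟩
end
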